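/- Let G be a connected r-regular graph (r ≥ 1) with vertex set {v_1,…,v_n}, and for each i = 1,…,n let H_i be an r_i-regular graph on t_i ≥ 1 vertices. Fix i and let δ be an eigenvalue of the normalized Laplacian 𝓛(H_i) that admits a (real) eigenvector orthogonal to the all-ones vector. Then (1 + r_i δ)/(r_i + 1) is an eigenvalue of the normalized Laplacian of the generalized subdivision-vertex corona S(G)⊙∧_{i=1}^n H_i. -/

import Mathlib

open Matrix Polynomial

/-- Adjacency matrix over `ℝ` (with classical decidability). -/
noncomputable def adjM {V : Type*} [Fintype V] [DecidableEq V] (G : SimpleGraph V) :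
    Matrix V V ℝ :=
  letI : DecidableRel G.Adj := Classical.decRel _
  G.adjMatrix ℝ

/-- Degree of a vertex (with classical decidability). -/
noncomputable def cdeg {V : Type*} [Fintype V] (G : SimpleGraph V) (v : V) : ℕ :=
  letI : DecidableRel G.Adj := Classical.decRel _
  G.degree v

/-- The normalized Laplacian `𝓛(G) = I - D^{-1/2} A D^{-1/2}` of a finite graph. -/
noncomputable def normLap {V : Type*} [Fintype V] [DecidableEq V] (G : SimpleGraph V) :
    Matrix V V ℝ :=
  1 - Matrix.diagonal (fun v => (Real.sqrt (cdeg G v))⁻¹) * adjM G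
      * Matrix.diagonal (fun v => (Real.sqrt (cdeg G v))⁻¹)

/-- `x` is an eigenvalue of the real matrix `M`. -/
def IsEigenvalue {V : Type*} [Fintype V] (M : Matrix V V ℝ) (x : ℝ) : Prop :=
  ∃ v : V → ℝ, v ≠ 0 ∧ M.mulVec v = x • v

/-- The generalized subdivision-vertex corona `S(G) ⊙ ∧ᵢ Hᵢ`: take the subdivision `S(G)`
(vertices of `G` together with one inserted vertex per edge, each edge `uv` replaced by the
path `u–e–v`), add a disjoint copy of each `Hᵢ`, and join the `i`-th vertex of `G` to every
vertex of `Hᵢ`. -/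
def svc {n : ℕ} (G : SimpleGraph (Fin n)) (t : Fin n → ℕ)
    (H : ∀ i : Fin n, SimpleGraph (Fin (t i))) :
    SimpleGraph (Fin n ⊕ (G.edgeSet ⊕ Σ i : Fin n, Fin (t i))) :=
  SimpleGraph.fromRel (fun a b =>
    match a, b with
    | Sum.inl v, Sum.inr (Sum.inl e) => v ∈ (e : Sym2 (Fin n))
    | Sum.inl v, Sum.inr (Sum.inr ⟨i, _⟩) => v = i
    | Sum.inr (Sum.inr ⟨i, w⟩), Sum.inr (Sum.inr ⟨j, w'⟩) =>
        ∃ h : i = j, (H j).Adj (h ▸ w) w'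
    | _, _ => False)

/-!
Extend an eigenvector `v` of `𝓛(Hᵢ)` with `∑ v = 0` by zero to the corona. Every vertex outside
the copy of `Hᵢ` is adjacent to all or none of it, so the adjacency matrix sends the extension to
the extension of `A(Hᵢ) v` (an outside vertex sees `∑ v = 0` or nothing). All vertices of the copy
have degree `rᵢ + 1`, so `𝓛` acts there as `1 - (rᵢ + 1)⁻¹ A(Hᵢ)`, while regularity of `Hᵢ` gives
`A(Hᵢ) v = rᵢ (1 - δ) v`.
-/
namespace SimpleGraph

variable {V W : Type*} [Fintype V]

lemma cdeg_eq_degree (Γ : SimpleGraph V) [DecidableRel Γ.Adj] (u : V) :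
    cdeg Γ u = Γ.degree u := by
  unfold cdeg; congr!

lemma adjM_eq_adjMatrix [DecidableEq V] (Γ : SimpleGraph V) [DecidableRel Γ.Adj] :
    adjM Γ = Γ.adjMatrix ℝ := by
  unfold adjM; congr!

-- A module (homogeneous set) in the sense of modular decomposition.
def IsModule (Γ : SimpleGraph V) (S : Set V) : Prop :=
  ∀ u ∉ S, (∀ s ∈ S, Γ.Adj u s) ∨ ∀ s ∈ S, ¬ Γ.Adj u s

variable [DecidableEq V]

lemma adjM_apply_of_adj {Γ : SimpleGraph V} {u w : V} (h : Γ.Adj u w) : adjM Γ u w = 1 := by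
  classical
  rw [adjM_eq_adjMatrix, adjMatrix_apply, if_pos h]

lemma adjM_apply_of_not_adj {Γ : SimpleGraph V} {u w : V} (h : ¬ Γ.Adj u w) : adjM Γ u w = 0 := by
  classical
  rw [adjM_eq_adjMatrix, adjMatrix_apply, if_neg h]

lemma adjM_eq_zero_of_cdeg_eq_zero {Γ : SimpleGraph V} (hΓ : ∀ u, cdeg Γ u = 0) :
    adjM Γ = 0 := by
  classical
  ext u w
  rw [adjM_eq_adjMatrix, adjMatrix_apply, Matrix.zero_apply, ite_eq_right_iff]
  intro h
  have := (Γ.degree_pos_iff_exists_adj u).2 ⟨w, h⟩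
  rw [← cdeg_eq_degree, hΓ] at this
  exact absurd this (lt_irrefl 0)

lemma normLap_eq_of_cdeg_eq {Γ : SimpleGraph V} {d : ℕ} (hΓ : ∀ u, cdeg Γ u = d) :
    normLap Γ = 1 - (d : ℝ)⁻¹ • adjM Γ := by
  ext u w
  simp only [normLap, Matrix.sub_apply, Matrix.mul_diagonal, Matrix.diagonal_mul,
    Matrix.smul_apply, hΓ, smul_eq_mul]
  rw [mul_right_comm, ← mul_inv, Real.mul_self_sqrt (Nat.cast_nonneg d)]

lemma adjM_mulVec_eq_of_normLap_mulVec {Γ : SimpleGraph V} {d : ℕ} (hΓ : ∀ u, cdeg Γ u = d)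
    {δ : ℝ} {v : V → ℝ} (hv : normLap Γ *ᵥ v = δ • v) :
    adjM Γ *ᵥ v = ((d : ℝ) * (1 - δ)) • v := by
  rcases eq_or_ne d 0 with rfl | hd
  · simp [adjM_eq_zero_of_cdeg_eq_zero hΓ]
  · rw [normLap_eq_of_cdeg_eq hΓ, sub_mulVec, one_mulVec, smul_mulVec] at hv
    calc adjM Γ *ᵥ v = (d : ℝ) • (v - (v - (d : ℝ)⁻¹ • adjM Γ *ᵥ v)) := by
          rw [sub_sub_cancel, smul_inv_smul₀ (by exact_mod_cast hd)]
      _ = ((d : ℝ) * (1 - δ)) • v := by rw [hv, mul_smul, sub_smul, one_smul]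

lemma invSqrtDeg_mulVec_extend {Γ : SimpleGraph V} (f : W → V) {D : ℕ}
    (hdeg : ∀ a, cdeg Γ (f a) = D) (x : W → ℝ) :
    diagonal (fun u => (√(cdeg Γ u : ℝ))⁻¹) *ᵥ Function.extend f x 0 =
      (√(D : ℝ))⁻¹ • Function.extend f x 0 := by
  funext u
  rw [mulVec_diagonal, Pi.smul_apply, smul_eq_mul]
  by_cases hu : u ∈ Set.range f
  · obtain ⟨a, rfl⟩ := hu
    rw [hdeg]
  · rw [Function.extend_apply' _ _ _ hu, Pi.zero_apply, mul_zero, mul_zero]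

variable [Fintype W] [DecidableEq W] {Γ : SimpleGraph V} {H : SimpleGraph W}

lemma adjM_mulVec_extend (f : H ↪g Γ) (hf : Γ.IsModule (Set.range f)) {v : W → ℝ}
    (hv : ∑ a, v a = 0) :
    adjM Γ *ᵥ Function.extend f v 0 = Function.extend f (adjM H *ᵥ v) 0 := by
  have hsum (u : V) : (adjM Γ *ᵥ Function.extend f v 0) u = ∑ a, adjM Γ u (f a) * v a := by
    refine (Fintype.sum_of_injective f f.injective _ _ (fun u' hu' => ?_) fun a => ?_).symm
    · rw [Function.extend_apply' _ _ _ hu', Pi.zero_apply, mul_zero]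
    · rw [f.injective.extend_apply]
  funext u
  rw [hsum]
  by_cases hu : u ∈ Set.range f
  · obtain ⟨b, rfl⟩ := hu
    rw [f.injective.extend_apply, mulVec, dotProduct]
    congr! 2 with a
    by_cases hab : H.Adj b a
    · rw [adjM_apply_of_adj hab, adjM_apply_of_adj (f.map_adj_iff.2 hab)]
    · rw [adjM_apply_of_not_adj hab, adjM_apply_of_not_adj (mt f.map_adj_iff.1 hab)]
  · rw [Function.extend_apply' _ _ _ hu, Pi.zero_apply]
    rcases hf u hu with hall | hnone
    · simp [adjM_apply_of_adj (hall _ (Set.mem_range_self _)), hv]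
    · simp [adjM_apply_of_not_adj (hnone _ (Set.mem_range_self _))]

lemma normLap_mulVec_extend (f : H ↪g Γ) (hf : Γ.IsModule (Set.range f)) {D : ℕ}
    (hdeg : ∀ a, cdeg Γ (f a) = D) {v : W → ℝ} (hv : ∑ a, v a = 0) :
    normLap Γ *ᵥ Function.extend f v 0 =
      Function.extend f (v - (D : ℝ)⁻¹ • adjM H *ᵥ v) 0 := by
  have hD : (√(D : ℝ))⁻¹ * (√(D : ℝ))⁻¹ = (D : ℝ)⁻¹ := by
    rw [← mul_inv, Real.mul_self_sqrt (Nat.cast_nonneg D)]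
  have hext := invSqrtDeg_mulVec_extend f hdeg
  rw [normLap, sub_mulVec, one_mulVec, ← mulVec_mulVec, ← mulVec_mulVec, hext, mulVec_smul,
    adjM_mulVec_extend f hf hv, mulVec_smul, hext, smul_smul, hD, ← Function.extend_smul,
    smul_zero, ← Function.extend_sub, sub_zero]

theorem isEigenvalue_normLap_of_isModule (f : H ↪g Γ) (hf : Γ.IsModule (Set.range f))
    {D : ℕ} (hdeg : ∀ a, cdeg Γ (f a) = D) {μ : ℝ} {v : W → ℝ} (hv0 : v ≠ 0)
    (hv : adjM H *ᵥ v = μ • v) (hsum : ∑ a, v a = 0) :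
    IsEigenvalue (normLap Γ) (1 - μ / D) := by
  refine ⟨Function.extend f v 0, fun h => hv0 ?_, ?_⟩
  · funext a
    rw [← f.injective.extend_apply v 0 a, h, Pi.zero_apply, Pi.zero_apply]
  · have hcoeff : v - (D : ℝ)⁻¹ • μ • v = (1 - μ / D) • v := by
      rw [sub_smul, one_smul, smul_smul, inv_mul_eq_div]
    rw [normLap_mulVec_extend f hf hdeg hsum, hv, hcoeff, ← Function.extend_smul, smul_zero]

end SimpleGraph

section Corona

open SimpleGraph

variable {n : ℕ} (G : SimpleGraph (Fin n)) (t : Fin n → ℕ)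
  (H : ∀ i : Fin n, SimpleGraph (Fin (t i)))

@[simp]
lemma svc_adj_inl_sigma (j i : Fin n) (w : Fin (t i)) :
    (svc G t H).Adj (Sum.inl j) (Sum.inr (Sum.inr ⟨i, w⟩)) ↔ j = i := by
  simp [svc, fromRel_adj]

@[simp]
lemma svc_not_adj_edge_sigma (e : G.edgeSet) (i : Fin n) (w : Fin (t i)) :
    ¬ (svc G t H).Adj (Sum.inr (Sum.inl e)) (Sum.inr (Sum.inr ⟨i, w⟩)) := by
  simp [svc, fromRel_adj]

@[simp]
lemma svc_adj_sigma_sigma_self (i : Fin n) (w w' : Fin (t i)) :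
    (svc G t H).Adj (Sum.inr (Sum.inr ⟨i, w⟩)) (Sum.inr (Sum.inr ⟨i, w'⟩)) ↔ (H i).Adj w w' := by
  simp only [svc, fromRel_adj, ne_eq, Sum.inr.injEq, Sigma.mk.injEq, heq_eq_eq, true_and,
    exists_const, (H i).adj_comm w' w, or_self, and_iff_right_iff_imp]
  exact fun h => h.ne

lemma svc_not_adj_sigma_sigma_of_ne {i i' : Fin n} (h : i ≠ i') (w : Fin (t i))
    (w' : Fin (t i')) :
    ¬ (svc G t H).Adj (Sum.inr (Sum.inr ⟨i, w⟩)) (Sum.inr (Sum.inr ⟨i', w'⟩)) := by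
  simp only [svc, fromRel_adj, ne_eq, Sum.inr.injEq, Sigma.mk.injEq, h, false_and,
    not_false_eq_true, IsEmpty.exists_iff, false_or, true_and, not_exists]
  rintro rfl
  exact absurd rfl h

def svcEmbedding (i : Fin n) : H i ↪g svc G t H where
  toFun w := Sum.inr (Sum.inr ⟨i, w⟩)
  inj' := by intro w w' h; simpa using h
  map_rel_iff' {w w'} := svc_adj_sigma_sigma_self G t H i w w'

@[simp]
lemma svcEmbedding_apply (i : Fin n) (w : Fin (t i)) :
    svcEmbedding G t H i w = Sum.inr (Sum.inr ⟨i, w⟩) :=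
  rfl

lemma isModule_range_svcEmbedding (i : Fin n) :
    (svc G t H).IsModule (Set.range (svcEmbedding G t H i)) := by
  rintro (j | e | ⟨i', w'⟩) hu
  · by_cases hj : j = i
    · left
      rintro _ ⟨w, rfl⟩
      simpa using hj
    · right
      rintro _ ⟨w, rfl⟩
      simpa using hj
  · right
    rintro _ ⟨w, rfl⟩
    exact svc_not_adj_edge_sigma G t H e i w
  · have hi : i' ≠ i := by
      rintro rfl
      exact hu ⟨w', rfl⟩
    right
    rintro _ ⟨w, rfl⟩
    exact svc_not_adj_sigma_sigma_of_ne G t H hi w' w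

lemma cdeg_svcEmbedding [DecidableRel G.Adj] (i : Fin n) (w : Fin (t i)) :
    cdeg (svc G t H) (svcEmbedding G t H i w) = cdeg (H i) w + 1 := by
  classical
  have hnbr : (svc G t H).neighborFinset (svcEmbedding G t H i w) =
      insert (Sum.inl i) (((H i).neighborFinset w).map (svcEmbedding G t H i).toEmbedding) := by
    ext u
    rw [mem_neighborFinset, adj_comm]
    rcases u with j | e | ⟨i', w'⟩
    · simp [eq_comm]
    · simp
    · by_cases hi : i' = i
      · subst hi
        simp [(H i').adj_comm w']
      · simp [svc_not_adj_sigma_sigma_of_ne G t H hi, Ne.symm hi]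
  rw [cdeg_eq_degree, cdeg_eq_degree, ← card_neighborFinset_eq_degree,
    ← card_neighborFinset_eq_degree, hnbr, Finset.card_insert_of_notMem (by simp), Finset.card_map]

end Corona

theorem stmt2 {n : ℕ}
    (G : SimpleGraph (Fin n)) [DecidableRel G.Adj]
    (t : Fin n → ℕ)
    (rr : Fin n → ℕ) (H : ∀ i : Fin n, SimpleGraph (Fin (t i)))
    (hH : ∀ i w, cdeg (H i) w = rr i)
    (i₀ : Fin n) (δ : ℝ)
    (hδ : ∃ v : Fin (t i₀) → ℝ, v ≠ 0 ∧ (normLap (H i₀)).mulVec v = δ • v ∧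
      ∑ w, v w = 0) :
    IsEigenvalue (normLap (svc G t H)) ((1 + (rr i₀ : ℝ) * δ) / ((rr i₀ : ℝ) + 1)) := by
  obtain ⟨v, hv0, hvL, hvs⟩ := hδ
  have hA := SimpleGraph.adjM_mulVec_eq_of_normLap_mulVec (hH i₀) hvL
  have hdeg (w : Fin (t i₀)) : cdeg (svc G t H) (svcEmbedding G t H i₀ w) = rr i₀ + 1 := by
    rw [cdeg_svcEmbedding, hH]
  convert SimpleGraph.isEigenvalue_normLap_of_isModule _ (isModule_range_svcEmbedding G t H i₀)
    hdeg hv0 hA hvs using 1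
  push_cast
  field_simp
  ring
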